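/- There exists a universal constant C > 0 such that the following holds. Assume in addition that 27·M·W³ ≤ 1 (equivalently 3W ≤ M^{−1/3}). Then for every index i ∈ {1,…,N}: (1/N)·∑_{j≠i} ‖x_i − x_j‖^{−3} ≤ C·M·(W³·d_min^{−3} + |log(M^{1/3}·W)| + 1). -/

import Mathlib

open MeasureTheory
open scoped ENNReal NNReal

/-- Euclidean `ℝ³`. -/
abbrev E3 : Type := EuclideanSpace ℝ (Fin 3)

/-!
Every point `x j` carries mass `1/N` of `T#μ`, which comes from `μ`-mass within distance `W`
of it; hence a ball of radius `r` contains at most `N M vol(B(r + W)) ≤ 32 N M (r³ + W³)` of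
the points. Write `d⁻³ ≤ 8 ∑_{k ≤ n, d ≤ 2ᵏ d_min} (2ᵏ d_min)⁻³` for `d_min ≤ d ≤ 2ⁿ d_min`
and exchange the sums: the ball of radius `2ᵏ d_min` contributes `≲ N M (1 + W³/(8ᵏ d_min³))`.
Points beyond the scale `M^{-1/3}` contribute at most `M` each, and reaching that scale takes
`n ≲ log(M^{-1/3}/d_min) ≤ |log(M^{1/3} W)| + W³/d_min³` doublings.
-/

open Metric Finset

lemma MeasureTheory.Measure.finsetSum_dirac_apply {X ι : Type*} [MeasurableSpace X]
    (t : Finset ι) (x : ι → X) {s : Set X} (hs : MeasurableSet s) [DecidablePred (· ∈ s)] :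
    (∑ j ∈ t, Measure.dirac (x j)) s = #{j ∈ t | x j ∈ s} := by
  simp [Measure.finsetSum_apply, Measure.dirac_apply' _ hs, Set.indicator_apply, sum_boole]

section Transport

variable {X : Type*} [PseudoMetricSpace X] [MeasurableSpace X] [OpensMeasurableSpace X]
  {μ : Measure X} {T : X → X} {W : ℝ}

lemma map_closedBall_le_of_ae_dist_le (hT : AEMeasurable T μ)
    (hW : ∀ᵐ y ∂μ, dist (T y) y ≤ W) (c : X) (r : ℝ) :
    μ.map T (closedBall c r) ≤ μ (closedBall c (r + W)) := by
  rw [Measure.map_apply_of_aemeasurable hT measurableSet_closedBall]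
  refine measure_mono_ae (hW.mono fun y hy (hyr : dist (T y) c ≤ r) => ?_)
  show dist y c ≤ r + W
  linarith [dist_triangle_left y c (T y)]

lemma card_dist_le_le_of_map_eq {ν : Measure X} {m : ℝ≥0∞} {N : ℕ} (x : Fin N → X)
    (hden : ∀ A, μ A ≤ m * ν A) (hT : AEMeasurable T μ) (hW : ∀ᵐ y ∂μ, dist (T y) y ≤ W)
    (hmap : μ.map T = (N : ℝ≥0∞)⁻¹ • ∑ j, Measure.dirac (x j)) (c : X) (r : ℝ) :
    (#{j | dist c (x j) ≤ r} : ℝ≥0∞) ≤ N * (m * ν (closedBall c (r + W))) := by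
  classical
  rcases N.eq_zero_or_pos with rfl | hN
  · simp
  have h := map_closedBall_le_of_ae_dist_le hT hW c r
  rw [hmap, Measure.smul_apply, smul_eq_mul,
    Measure.finsetSum_dirac_apply _ _ measurableSet_closedBall] at h
  simp only [mem_closedBall, dist_comm (x _)] at h
  calc (#{j | dist c (x j) ≤ r} : ℝ≥0∞)
      = N * ((N : ℝ≥0∞)⁻¹ * #{j | dist c (x j) ≤ r}) :=
        (ENNReal.mul_inv_cancel_left (by positivity) (ENNReal.natCast_ne_top N)).symm
    _ ≤ N * (m * ν (closedBall c (r + W))) := mul_le_mul_right (h.trans (hden _)) _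

end Transport

lemma card_norm_sub_le_le_of_map_eq {μ : Measure E3} {T : E3 → E3} {M W : ℝ} {N : ℕ}
    (x : Fin N → E3) (hM : 0 ≤ M) (hW : 0 ≤ W) (hden : ∀ A, μ A ≤ ENNReal.ofReal M * volume A)
    (hT : AEMeasurable T μ) (hWae : ∀ᵐ y ∂μ, ‖T y - y‖ ≤ W)
    (hmap : μ.map T = (N : ℝ≥0∞)⁻¹ • ∑ j, Measure.dirac (x j)) (c : E3) {r : ℝ} (hr : 0 ≤ r) :
    (#{j | ‖c - x j‖ ≤ r} : ℝ) ≤ 32 * (N * M) * (r ^ 3 + W ^ 3) := by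
  have h := card_dist_le_le_of_map_eq x hden hT
    (hWae.mono fun y hy => by rwa [dist_eq_norm]) hmap c r
  simp only [dist_eq_norm] at h
  rw [EuclideanSpace.volume_closedBall_fin_three, ← ENNReal.ofReal_pow (by positivity),
    ← ENNReal.ofReal_mul (by positivity), ← ENNReal.ofReal_mul hM, ← ENNReal.ofReal_natCast N,
    ← ENNReal.ofReal_mul (by positivity)] at h
  have hcube : (r + W) ^ 3 ≤ 4 * (r ^ 3 + W ^ 3) := by
    nlinarith [sq_nonneg (r - W), mul_nonneg hr hW]
  have hpi : Real.pi * 4 / 3 ≤ 8 := by linarith [Real.pi_le_four]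
  calc (#{j | ‖c - x j‖ ≤ r} : ℝ) ≤ N * (M * ((r + W) ^ 3 * (Real.pi * 4 / 3))) := by
        simpa using ENNReal.toReal_le_of_le_ofReal (by positivity) h
    _ ≤ N * (M * (4 * (r ^ 3 + W ^ 3) * 8)) := by gcongr
    _ = 32 * (N * M) * (r ^ 3 + W ^ 3) := by ring

lemma inv_pow_le_sum_dyadic {δ d : ℝ} (hδ : 0 < δ) (hd : δ ≤ d) (p : ℕ) :
    ∀ n : ℕ, d ≤ 2 ^ n * δ →
      (d ^ p)⁻¹ ≤ 2 ^ p * ∑ k ∈ range (n + 1), if d ≤ 2 ^ k * δ then ((2 ^ k * δ) ^ p)⁻¹ else 0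
  | 0, hdn => by
    obtain rfl : d = δ := le_antisymm (by simpa using hdn) hd
    simpa using le_mul_of_one_le_left (by positivity) (one_le_pow₀ one_le_two)
  | n + 1, hdn => by
    have hsum : 0 ≤ ∑ k ∈ range (n + 1), if d ≤ 2 ^ k * δ then ((2 ^ k * δ) ^ p)⁻¹ else 0 :=
      sum_nonneg fun k _ => by split_ifs <;> positivity
    rw [sum_range_succ, if_pos hdn, mul_add]
    by_cases h : d ≤ 2 ^ n * δ
    · have : 0 ≤ 2 ^ p * ((2 ^ (n + 1) * δ) ^ p)⁻¹ := by positivity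
      linarith [inv_pow_le_sum_dyadic hδ hd p n h]
    · have hhalf : 2 ^ p * ((2 ^ (n + 1) * δ) ^ p)⁻¹ = ((2 ^ n * δ) ^ p)⁻¹ := by
        rw [show (2 : ℝ) ^ (n + 1) * δ = 2 * (2 ^ n * δ) by ring, mul_pow, mul_inv,
          ← mul_assoc, mul_inv_cancel₀ (by positivity), one_mul]
      have : (d ^ p)⁻¹ ≤ ((2 ^ n * δ) ^ p)⁻¹ :=
        inv_anti₀ (by positivity) (pow_le_pow_left₀ (by positivity) (le_of_not_ge h) p)
      linarith [mul_nonneg (pow_nonneg zero_le_two p) hsum]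

lemma sum_inv_pow_le_of_card_le {ι : Type*} (s : Finset ι) (d : ι → ℝ) {δ R A B : ℝ} {p n : ℕ}
    (hp : p ≠ 0) (hδ : 0 < δ) (hd : ∀ j ∈ s, δ ≤ d j) (hR : 0 < R) (hRn : R ≤ 2 ^ n * δ)
    (hB : 0 ≤ B)
    (hcard : ∀ k : ℕ, (#{j ∈ s | d j ≤ 2 ^ k * δ} : ℝ) ≤ A * ((2 ^ k * δ) ^ p + B ^ p)) :
    ∑ j ∈ s, (d j ^ p)⁻¹ ≤ 2 ^ p * A * (n + 1 + 2 * (B ^ p / δ ^ p)) + #s * (R ^ p)⁻¹ := by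
  set c : ℕ → ℝ := fun k => ((2 ^ k * δ) ^ p)⁻¹
  have hA : 0 ≤ A :=
    nonneg_of_mul_nonneg_left ((Nat.cast_nonneg _).trans (hcard 0)) (by positivity)
  have hpoint : ∀ j ∈ s, (d j ^ p)⁻¹
      ≤ 2 ^ p * ∑ k ∈ range (n + 1), (if d j ≤ 2 ^ k * δ then c k else 0) + (R ^ p)⁻¹ := by
    intro j hj
    by_cases h : d j ≤ 2 ^ n * δ
    · have : 0 ≤ (R ^ p)⁻¹ := by positivity
      linarith [inv_pow_le_sum_dyadic hδ (hd j hj) p n h]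
    · have hsum : 0 ≤ ∑ k ∈ range (n + 1), (if d j ≤ 2 ^ k * δ then c k else 0) :=
        sum_nonneg fun k _ => by split_ifs <;> positivity
      have : (d j ^ p)⁻¹ ≤ (R ^ p)⁻¹ :=
        inv_anti₀ (by positivity) (pow_le_pow_left₀ hR.le (hRn.trans (le_of_not_ge h)) p)
      linarith [mul_nonneg (pow_nonneg zero_le_two p) hsum]
  have hswap : ∑ j ∈ s, ∑ k ∈ range (n + 1), (if d j ≤ 2 ^ k * δ then c k else 0)
      = ∑ k ∈ range (n + 1), (#{j ∈ s | d j ≤ 2 ^ k * δ} : ℝ) * c k := by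
    rw [sum_comm]
    exact sum_congr rfl fun k _ => by rw [← sum_filter, sum_const, nsmul_eq_mul]
  have hshell : ∀ k, (#{j ∈ s | d j ≤ 2 ^ k * δ} : ℝ) * c k
      ≤ A + A * (B ^ p / δ ^ p) * (1 / 2) ^ k := by
    intro k
    have hgeom : (((2 : ℝ) ^ k) ^ p)⁻¹ ≤ (1 / 2) ^ k := by
      rw [one_div_pow, one_div]
      exact inv_anti₀ (by positivity) (le_self_pow₀ (one_le_pow₀ one_le_two) hp)
    calc (#{j ∈ s | d j ≤ 2 ^ k * δ} : ℝ) * c k ≤ A * ((2 ^ k * δ) ^ p + B ^ p) * c k := by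
          gcongr; exact hcard k
      _ = A + A * (B ^ p / δ ^ p) * (((2 : ℝ) ^ k) ^ p)⁻¹ := by
          simp only [c]; field_simp; ring
      _ ≤ A + A * (B ^ p / δ ^ p) * (1 / 2) ^ k := by gcongr
  calc ∑ j ∈ s, (d j ^ p)⁻¹
      ≤ ∑ j ∈ s, (2 ^ p * ∑ k ∈ range (n + 1), (if d j ≤ 2 ^ k * δ then c k else 0)
          + (R ^ p)⁻¹) := sum_le_sum hpoint
    _ = 2 ^ p * ∑ k ∈ range (n + 1), (#{j ∈ s | d j ≤ 2 ^ k * δ} : ℝ) * c k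
          + #s * (R ^ p)⁻¹ := by
        rw [sum_add_distrib, ← mul_sum, hswap, sum_const, nsmul_eq_mul]
    _ ≤ 2 ^ p * ∑ k ∈ range (n + 1), (A + A * (B ^ p / δ ^ p) * (1 / 2) ^ k)
          + #s * (R ^ p)⁻¹ := by
        gcongr with k; exact hshell k
    _ ≤ 2 ^ p * A * (n + 1 + 2 * (B ^ p / δ ^ p)) + #s * (R ^ p)⁻¹ := by
        rw [sum_add_distrib, sum_const, card_range, nsmul_eq_mul, ← mul_sum]
        have := mul_le_mul_of_nonneg_left (sum_geometric_two_le (n + 1))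
          (by positivity : 0 ≤ A * (B ^ p / δ ^ p))
        push_cast
        nlinarith [pow_pos (two_pos (α := ℝ)) p]

lemma exists_le_two_pow_and_le_log {y : ℝ} (hy : 1 ≤ y) :
    ∃ n : ℕ, y ≤ 2 ^ n ∧ (n : ℝ) ≤ 2 * Real.log y + 1 := by
  obtain ⟨m, hm, hym⟩ := exists_nat_pow_near hy one_lt_two
  refine ⟨m + 1, hym.le, ?_⟩
  have hlog : m * Real.log 2 ≤ Real.log y := by
    rw [← Real.log_pow]; exact Real.log_le_log (by positivity) hm
  have hm0 : (0 : ℝ) ≤ m := m.cast_nonneg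
  push_cast
  nlinarith [Real.log_two_gt_d9, Real.log_nonneg hy]

lemma log_max_one_inv_div_le {a W δ : ℝ} (ha : 0 < a) (hW : 0 < W) (hδ : 0 < δ) :
    Real.log (max 1 (a⁻¹ / δ)) ≤ |Real.log (a * W)| + W ^ 3 / δ ^ 3 := by
  have hcube : Real.log (W / δ) ≤ W ^ 3 / δ ^ 3 := by
    have h := Real.log_le_rpow_div (x := W / δ) (by positivity) (by norm_num : (0 : ℝ) < 3)
    rw [Real.rpow_ofNat, div_pow] at h
    have : 0 ≤ W ^ 3 / δ ^ 3 := by positivity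
    linarith
  rcases le_total 1 (a⁻¹ / δ) with h | h
  · rw [max_eq_right h, show a⁻¹ / δ = (a * W)⁻¹ * (W / δ) by field_simp,
      Real.log_mul (by positivity) (by positivity), Real.log_inv]
    linarith [neg_le_abs (Real.log (a * W))]
  · rw [max_eq_left h, Real.log_one]
    positivity

/-- there is a universal constant `C > 0` such that for any `N ≥ 2`,
`M, W > 0`, any probability measure `μ` on `ℝ³` with density bounded by `M`, any
measurable transport map `T` with `‖T(y) − y‖ ≤ W` μ-a.e. pushing `μ` to the empirical
measure of points `x₁, …, x_N` whose minimal pairwise distance `d_min` is positive, if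
`27 M W³ ≤ 1` then for every `i`,
`(1/N) ∑_{j≠i} ‖x_i − x_j‖^{−3} ≤ C M (W³ d_min^{−3} + |log(M^{1/3} W)| + 1)`. -/
theorem discrete_sum_inv_dist_cube_le :
    ∃ C : ℝ, 0 < C ∧
      ∀ (N : ℕ) (M W : ℝ) (μ : Measure E3) (T : E3 → E3) (x : Fin N → E3) (dmin : ℝ),
        2 ≤ N → 0 < M → 0 < W →
        IsProbabilityMeasure μ →
        (∀ A : Set E3, μ A ≤ ENNReal.ofReal M * volume A) →
        Measurable T →
        (∀ᵐ y ∂μ, ‖T y - y‖ ≤ W) →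
        μ.map T = (N : ℝ≥0∞)⁻¹ • ∑ j : Fin N, Measure.dirac (x j) →
        dmin = sInf {d : ℝ | ∃ i j : Fin N, i ≠ j ∧ d = ‖x i - x j‖} →
        0 < dmin →
        27 * M * W ^ 3 ≤ 1 →
        ∀ i : Fin N,
          (N : ℝ)⁻¹ * ∑ j ∈ Finset.univ.filter (fun j => j ≠ i), (‖x i - x j‖ ^ 3)⁻¹
            ≤ C * M * (W ^ 3 / dmin ^ 3 + |Real.log (M ^ ((1 : ℝ) / 3) * W)| + 1) := by
  refine ⟨1024, by norm_num, ?_⟩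
  intro N M W μ T x dmin _ hM hW _ hden hT hWae hmap hdmin hdpos _ i
  set a := M ^ ((1 : ℝ) / 3)
  have ha : 0 < a := by positivity
  have haM : a ^ 3 = M := by
    rw [← Real.rpow_mul_natCast hM.le]; norm_num
  have hsep : ∀ j ∈ univ.filter (fun j => j ≠ i), dmin ≤ ‖x i - x j‖ := fun j hj =>
    hdmin ▸ csInf_le ⟨0, by rintro _ ⟨_, _, _, rfl⟩; positivity⟩
      ⟨i, j, (mem_filter.1 hj).2.symm, rfl⟩
  obtain ⟨n, hn2, hn⟩ := exists_le_two_pow_and_le_log (le_max_left 1 (a⁻¹ / dmin))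
  have hsum := sum_inv_pow_le_of_card_le _ (fun j => ‖x i - x j‖) (p := 3) three_ne_zero hdpos
    hsep (inv_pos.2 ha) ((div_le_iff₀ hdpos).1 ((le_max_right _ _).trans hn2)) hW.le fun k =>
      (Nat.cast_le.2 (card_le_card (filter_subset_filter _ (subset_univ _)))).trans
        (card_norm_sub_le_le_of_map_eq x hM.le hW.le hden hT.aemeasurable hWae hmap (x i)
          (by positivity))
  have hlog := log_max_one_inv_div_le ha hW hdpos
  have hcard : (#(univ.filter (fun j => j ≠ i)) : ℝ) ≤ N := by
    exact_mod_cast (card_filter_le _ _).trans (card_fin N).le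
  rw [inv_pow, inv_inv, haM] at hsum
  rw [inv_mul_le_iff₀ (by positivity)]
  have hNM : 0 ≤ (N : ℝ) * M := by positivity
  have hQ : 0 ≤ W ^ 3 / dmin ^ 3 := by positivity
  have hn' : (n : ℝ) ≤ 2 * (|Real.log (a * W)| + W ^ 3 / dmin ^ 3) + 1 := by linarith
  linarith [mul_le_mul_of_nonneg_left hn' hNM, mul_le_mul_of_nonneg_right hcard hM.le,
    mul_nonneg hNM (abs_nonneg (Real.log (a * W))), mul_nonneg hNM hQ]
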